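/- arXiv:2306.04464 — 4 statements merged into one kernel-verified Lean document; each statement's English description precedes it below -/
import Mathlib

section
/- Combine the previous two statements: Let Q ⊆ ℝ^C be a nonempty closed convex box, ψ, φ : ℝ^C → ℝ^C Lipschitz with constants L_ψ, L_φ, X ∈ ℝ^{C×C}, v̂ ∈ ℝ^C, and 0 < ε ≤ 1 such that L_ψ + L_φ‖X‖ < 1. Suppose g(q) = q + ε(ψ(q) + φ(Xq + v̂) − q) maps Q into Q. Then g has a unique fixed point in Q and all iterates of g from any initial point in Q converge to it. -/
/-!
The map `g` is a relaxation `q ↦ q + ε (f q - q)` of `f q = ψ q + φ (X q + v̂)`, which is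
Lipschitz with constant `K = L_ψ + L_φ ‖X‖ < 1`; hence `g` is a contraction with constant
`1 - ε (1 - K) < 1` on all of Euclidean space. Banach's theorem gives a unique fixed point,
attracting every orbit, and it lies in `Q` because `Q` is closed and invariant under `g`.
-/

open Set

/-- Operator (spectral) norm of a real matrix, viewed as a linear map on
Euclidean space. -/
noncomputable def opNorm {C : ℕ} (M : Matrix (Fin C) (Fin C) ℝ) : ℝ :=
  ‖LinearMap.toContinuousLinearMap (Matrix.toEuclideanLin M)‖

section Lipschitz

variable {E F G : Type*} [SeminormedAddCommGroup E] [NormedSpace ℝ E]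
  [SeminormedAddCommGroup F] [SeminormedAddCommGroup G] [NormedSpace ℝ G]

theorem norm_relaxation_sub_le {f : E → E} {K ε : ℝ}
    (hf : ∀ a b, ‖f a - f b‖ ≤ K * ‖a - b‖) (hε0 : 0 ≤ ε) (hε1 : ε ≤ 1) (a b : E) :
    ‖(a + ε • (f a - a)) - (b + ε • (f b - b))‖ ≤ (1 - ε * (1 - K)) * ‖a - b‖ := by
  have hsplit : (a + ε • (f a - a)) - (b + ε • (f b - b))
      = (1 - ε) • (a - b) + ε • (f a - f b) := by
    module
  calc ‖(a + ε • (f a - a)) - (b + ε • (f b - b))‖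
      ≤ ‖(1 - ε) • (a - b)‖ + ‖ε • (f a - f b)‖ := hsplit ▸ norm_add_le _ _
    _ ≤ (1 - ε) * ‖a - b‖ + ε * (K * ‖a - b‖) := by
      rw [norm_smul, norm_smul, Real.norm_of_nonneg (sub_nonneg.2 hε1), Real.norm_of_nonneg hε0]
      gcongr
      exact hf a b
    _ = (1 - ε * (1 - K)) * ‖a - b‖ := by ring

theorem norm_add_comp_affine_sub_le {ψ : E → F} {φ : G → F} {Lψ Lφ : ℝ}
    (hψ : ∀ a b, ‖ψ a - ψ b‖ ≤ Lψ * ‖a - b‖) (hφ : ∀ a b, ‖φ a - φ b‖ ≤ Lφ * ‖a - b‖)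
    (hLφ0 : 0 ≤ Lφ) (A : E →L[ℝ] G) (v : G) (a b : E) :
    ‖(ψ a + φ (A a + v)) - (ψ b + φ (A b + v))‖ ≤ (Lψ + Lφ * ‖A‖) * ‖a - b‖ := by
  have hφA : ‖φ (A a + v) - φ (A b + v)‖ ≤ Lφ * (‖A‖ * ‖a - b‖) :=
    calc ‖φ (A a + v) - φ (A b + v)‖ ≤ Lφ * ‖A (a - b)‖ := by
          simpa only [add_sub_add_right_eq_sub, map_sub] using hφ (A a + v) (A b + v)
      _ ≤ Lφ * (‖A‖ * ‖a - b‖) := by gcongr; exact A.le_opNorm _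
  calc ‖(ψ a + φ (A a + v)) - (ψ b + φ (A b + v))‖
      ≤ ‖ψ a - ψ b‖ + ‖φ (A a + v) - φ (A b + v)‖ := by
        rw [add_sub_add_comm]; exact norm_add_le _ _
    _ ≤ Lψ * ‖a - b‖ + Lφ * (‖A‖ * ‖a - b‖) := add_le_add (hψ a b) hφA
    _ = (Lψ + Lφ * ‖A‖) * ‖a - b‖ := by ring

end Lipschitz

theorem PiLp.isClosed_setOf_forall_mem {p : ENNReal} {ι : Type*} [Fintype ι] {β : ι → Type*}
    [∀ i, TopologicalSpace (β i)] {s : ∀ i, Set (β i)} (hs : ∀ i, IsClosed (s i)) :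
    IsClosed {q : PiLp p β | ∀ i, q i ∈ s i} := by
  simp only [ofPred_forall]
  exact isClosed_iInter fun i => (hs i).preimage (PiLp.continuous_apply p β i)

theorem ContractingWith.fixedPoint_mem {α : Type*} [MetricSpace α] [CompleteSpace α]
    [Nonempty α] {K : NNReal} {f : α → α} (hf : ContractingWith K f) {s : Set α}
    (hsc : IsClosed s) (hne : s.Nonempty) (hsf : MapsTo f s s) :
    fixedPoint f hf ∈ s := by
  obtain ⟨x, hx⟩ := hne
  obtain ⟨y, hys, hfy, -⟩ :=
    ContractingWith.exists_fixedPoint' hsc.isComplete hsf (hf.restrict hsf) hx (edist_ne_top _ _)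
  exact hf.fixedPoint_unique hfy ▸ hys

theorem unique_asymptotically_stable_equilibrium_CVP_SC_general {C : ℕ}
    (lo hi : Fin C → ℝ) (Q : Set (EuclideanSpace ℝ (Fin C)))
    (hQ : Q = {q : EuclideanSpace ℝ (Fin C) | ∀ i, q i ∈ Set.Icc (lo i) (hi i)})
    (hne : Q.Nonempty)
    (ψ φ : EuclideanSpace ℝ (Fin C) → EuclideanSpace ℝ (Fin C))
    (Lψ Lφ : ℝ) (hLφ0 : 0 ≤ Lφ)
    (hψ : ∀ a b, ‖ψ a - ψ b‖ ≤ Lψ * ‖a - b‖)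
    (hφ : ∀ a b, ‖φ a - φ b‖ ≤ Lφ * ‖a - b‖)
    (X : Matrix (Fin C) (Fin C) ℝ) (vhat : EuclideanSpace ℝ (Fin C))
    (ε : ℝ) (hε0 : 0 < ε) (hε1 : ε ≤ 1)
    (hC1 : Lψ + Lφ * opNorm X < 1)
    (g : EuclideanSpace ℝ (Fin C) → EuclideanSpace ℝ (Fin C))
    (hg : ∀ q, g q = q + ε • (ψ q + φ (Matrix.toEuclideanLin X q + vhat) - q))
    (hmaps : Set.MapsTo g Q Q) :
    ∃ qstar ∈ Q, g qstar = qstar ∧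
      (∀ q' ∈ Q, g q' = q' → q' = qstar) ∧
      ∀ q0 ∈ Q, Filter.Tendsto (fun t => g^[t] q0) Filter.atTop (nhds qstar) := by
  have hgc : ContractingWith (1 - ε * (1 - (Lψ + Lφ * opNorm X))).toNNReal g := by
    refine ⟨Real.toNNReal_lt_one.2 ?_, LipschitzWith.of_dist_le' fun a b => ?_⟩
    · nlinarith
    · rw [dist_eq_norm, dist_eq_norm, hg, hg]
      exact norm_relaxation_sub_le
        (norm_add_comp_affine_sub_le hψ hφ hLφ0
          (LinearMap.toContinuousLinearMap (Matrix.toEuclideanLin X)) vhat) hε0.le hε1 a b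
  have hQc : IsClosed Q := hQ ▸ PiLp.isClosed_setOf_forall_mem fun _ => isClosed_Icc
  exact ⟨_, hgc.fixedPoint_mem hQc hne hmaps, hgc.fixedPoint_isFixedPt,
    fun _ _ hq => hgc.fixedPoint_unique hq, fun q0 _ => hgc.tendsto_iterate_fixedPoint q0⟩

/-- Theorem 1 (CVP-SC): under L_ψ + L_φ‖X‖ < 1, the incremental Volt/Var map
g(q) = q + ε(ψ(q) + φ(Xq + v̂) − q) mapping the feasible box Q into itself
has a unique fixed point in Q, and all iterates from Q converge to it. -/
theorem unique_asymptotically_stable_equilibrium_CVP_SC {C : ℕ}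
    (lo hi : Fin C → ℝ) (Q : Set (EuclideanSpace ℝ (Fin C)))
    (hQ : Q = {q : EuclideanSpace ℝ (Fin C) | ∀ i, q i ∈ Set.Icc (lo i) (hi i)})
    (hne : Q.Nonempty)
    (ψ φ : EuclideanSpace ℝ (Fin C) → EuclideanSpace ℝ (Fin C))
    (Lψ Lφ : ℝ) (hLψ0 : 0 ≤ Lψ) (hLφ0 : 0 ≤ Lφ)
    (hψ : ∀ a b, ‖ψ a - ψ b‖ ≤ Lψ * ‖a - b‖)
    (hφ : ∀ a b, ‖φ a - φ b‖ ≤ Lφ * ‖a - b‖)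
    (X : Matrix (Fin C) (Fin C) ℝ) (vhat : EuclideanSpace ℝ (Fin C))
    (ε : ℝ) (hε0 : 0 < ε) (hε1 : ε ≤ 1)
    (hC1 : Lψ + Lφ * opNorm X < 1)
    (g : EuclideanSpace ℝ (Fin C) → EuclideanSpace ℝ (Fin C))
    (hg : ∀ q, g q = q + ε • (ψ q + φ (Matrix.toEuclideanLin X q + vhat) - q))
    (hmaps : Set.MapsTo g Q Q) :
    ∃ qstar ∈ Q, g qstar = qstar ∧
      (∀ q' ∈ Q, g q' = q' → q' = qstar) ∧
      ∀ q0 ∈ Q, Filter.Tendsto (fun t => g^[t] q0) Filter.atTop (nhds qstar) :=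
  unique_asymptotically_stable_equilibrium_CVP_SC_general lo hi Q hQ hne ψ φ Lψ Lφ hLφ0 hψ hφ X vhat
    ε hε0 hε1 hC1 g hg hmaps
end

section
/- Let X ∈ ℝ^{C×C} be symmetric positive definite, and for each n let ψ_n : ℝ → ℝ be Lipschitz with constant L_ψ_n < 1 and φ_n : ℝ → ℝ be strictly decreasing. Define Ψ(q) = (ψ_1(q_1), …, ψ_C(q_C)) and Φ(v) = (φ_1(v_1), …, φ_C(v_C)). Then there is at most one q ∈ ℝ^C satisfying q = Ψ(q) + Φ(Xq + v̂) for fixed v̂ ∈ ℝ^C. -/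
/-!
Write `d = q - q'` and `u = Xq + v̂`, `u' = Xq' + v̂`, so that `Xd = u - u'`. Since `ψ_n` is a
contraction, `x ↦ x - ψ_n x` is strictly increasing, and the equilibrium equation reads
`q_n - ψ_n q_n = φ_n u_n`; as `φ_n` is decreasing, `d_n` and `(Xd)_n` can never have the same
strict sign. Hence `dᵀXd = ∑ₙ dₙ (Xd)ₙ ≤ 0`, which forces `d = 0` by positive definiteness.
-/

theorem strictMono_id_sub_of_abs_sub_le {K : Type*} [CommRing K] [LinearOrder K]
    [IsStrictOrderedRing K] {ψ : K → K} {L : K}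
    (hψ : ∀ a b, |ψ a - ψ b| ≤ L * |a - b|) (hL : L < 1) :
    StrictMono fun x ↦ x - ψ x := by
  intro a b hab
  have hba : 0 < b - a := sub_pos.mpr hab
  have hψba : ψ b - ψ a ≤ L * (b - a) := by
    simpa [abs_of_pos hba] using (le_abs_self _).trans (hψ b a)
  have hLba : L * (b - a) < b - a := by simpa using mul_lt_mul_of_pos_right hL hba
  linarith

theorem sub_mul_sub_nonpos_of_strictMono_of_antitone {R β : Type*} [Ring R] [LinearOrder R]
    [IsOrderedRing R] [Preorder β] {f φ : R → β} (hf : StrictMono f) (hφ : Antitone φ)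
    {x x' u u' : R}
    (h : f x = φ u) (h' : f x' = φ u') :
    (x - x') * (u - u') ≤ 0 := by
  rcases le_total u u' with hu | hu
  · have hx : x' ≤ x := hf.le_iff_le.mp (h ▸ h' ▸ hφ hu)
    exact mul_nonpos_of_nonneg_of_nonpos (sub_nonneg.mpr hx) (sub_nonpos.mpr hu)
  · have hx : x ≤ x' := hf.le_iff_le.mp (h ▸ h' ▸ hφ hu)
    exact mul_nonpos_of_nonpos_of_nonneg (sub_nonpos.mpr hx) (sub_nonneg.mpr hu)

open Matrix in
theorem Matrix.PosDef.eq_zero_of_forall_mul_mulVec_nonpos {ι R : Type*} [Fintype ι]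
    [CommRing R] [PartialOrder R] [IsOrderedRing R] [StarRing R] [TrivialStar R]
    {M : Matrix ι ι R} (hM : M.PosDef) {d : ι → R} (hd : ∀ i, d i * (M *ᵥ d) i ≤ 0) :
    d = 0 := by
  by_contra hne
  have hpos := hM.dotProduct_mulVec_pos hne
  have hnonpos : star d ⬝ᵥ (M *ᵥ d) ≤ 0 := by
    simpa [dotProduct] using Finset.sum_nonpos fun i _ ↦ hd i
  exact hpos.not_ge hnonpos

/-- Uniqueness part of Theorem 2 (RP-SC): if X is symmetric positive definite,
each ψ_n is Lipschitz with constant < 1 and each φ_n is strictly decreasing,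
then the equilibrium equation q_n = ψ_n(q_n) + φ_n((Xq + v̂)_n) has at most
one solution. -/
theorem unique_equilibrium_RP_SC {C : ℕ}
    (X : Matrix (Fin C) (Fin C) ℝ) (hX : X.PosDef)
    (ψ φ : Fin C → ℝ → ℝ) (Lψ : Fin C → ℝ)
    (hψ : ∀ n, ∀ a b : ℝ, |ψ n a - ψ n b| ≤ Lψ n * |a - b|)
    (hLψ : ∀ n, Lψ n < 1)
    (hφ : ∀ n, StrictAnti (φ n))
    (vhat : Fin C → ℝ) (q q' : Fin C → ℝ)
    (hq : ∀ n, q n = ψ n (q n) + φ n ((X.mulVec q + vhat) n))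
    (hq' : ∀ n, q' n = ψ n (q' n) + φ n ((X.mulVec q' + vhat) n)) :
    q = q' := by
  refine sub_eq_zero.mp (hX.eq_zero_of_forall_mul_mulVec_nonpos fun n ↦ ?_)
  have hXd : (X.mulVec (q - q')) n = (X.mulVec q + vhat) n - (X.mulVec q' + vhat) n := by
    simp [Matrix.mulVec_sub]
  rw [hXd, Pi.sub_apply]
  exact sub_mul_sub_nonpos_of_strictMono_of_antitone
    (strictMono_id_sub_of_abs_sub_le (hψ n) (hLψ n)) (hφ n).antitone
    (sub_eq_of_eq_add' (hq n)) (sub_eq_of_eq_add' (hq' n))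
end

section
/- Let X ∈ ℝ^{C×C} be symmetric positive definite, let J_ψ, J_φ ∈ ℝ^{C×C} be diagonal matrices with J_ψ ≺ I and J_φ ≺ 0, and let 0 < ε ≤ 1. Then every eigenvalue λ of J = (1−ε)I + εJ_ψ + εJ_φ X is real and satisfies λ < 1. -/
/-!
With `P = (-J_φ)⁻¹`, a positive diagonal matrix, `P - P J = ε (P (I - J_ψ) + X)` is positive
definite. If `J v = μ v` with `v ≠ 0`, then `v* P J v = μ (v* P v)`, so
`(1 - μ) (v* P v) = v* (P - P J) v > 0`. Since `v* P v > 0` as well, `1 - μ` is a positive real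
number (in the order of `ℂ`, `0 < z` means `z` is real and positive).
-/

open Matrix
open scoped ComplexOrder MatrixOrder

namespace Matrix

variable {n 𝕜 : Type*} [Fintype n] [RCLike 𝕜]

theorem PosDef.map_ofReal [DecidableEq n] {A : Matrix n n ℝ} (hA : A.PosDef) :
    (A.map ((↑) : ℝ → 𝕜)).PosDef := by
  obtain ⟨B, rfl⟩ := CStarAlgebra.nonneg_iff_eq_star_mul_self.mp hA.posSemidef.nonneg
  have hmap : (star B * B).map ((↑) : ℝ → 𝕜) = (B.map (↑))ᴴ * B.map (↑) := by
    ext i j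
    simp [mul_apply, conjTranspose_apply]
  refine hmap ▸ (posSemidef_conjTranspose_mul_self _).posDef_iff_det_ne_zero.mpr ?_
  rw [← hmap, ← RCLike.algebraMap_eq_ofReal, ← RingHom.mapMatrix_apply, ← RingHom.map_det]
  exact RCLike.ofReal_ne_zero.mpr hA.det_pos.ne'

theorem lt_one_of_mulVec_eq_smul {M P : Matrix n n 𝕜} (hP : P.PosDef)
    (hPM : (P - P * M).PosDef) {μ : 𝕜} {v : n → 𝕜} (hv : v ≠ 0) (hMv : M *ᵥ v = μ • v) :
    μ < 1 := by
  have hq : star v ⬝ᵥ (P * M) *ᵥ v = μ * (star v ⬝ᵥ P *ᵥ v) := by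
    rw [← mulVec_mulVec, hMv, mulVec_smul, dotProduct_smul, smul_eq_mul]
  have hpos : 0 < (1 - μ) * (star v ⬝ᵥ P *ᵥ v) := by
    simpa [sub_mul, sub_mulVec, dotProduct_sub, hq] using hPM.dotProduct_mulVec_pos hv
  exact sub_pos.mp (pos_of_mul_pos_left hpos (hP.dotProduct_mulVec_pos hv).le)

theorem diagonal_neg_inv_sub_mul_eq {K : Type*} [Field K] [DecidableEq n] {φ : n → K}
    (hφ : ∀ i, φ i ≠ 0) (ψ : n → K) (X : Matrix n n K) (ε : K) :
    diagonal (fun i => -(φ i)⁻¹) - diagonal (fun i => -(φ i)⁻¹) *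
        ((1 - ε) • 1 + ε • diagonal ψ + ε • (diagonal φ * X))
      = ε • (diagonal (fun i => -(φ i)⁻¹ * (1 - ψ i)) + X) := by
  ext i j
  simp only [sub_apply, add_apply, smul_apply, smul_eq_mul, diagonal_mul, diagonal_apply,
    one_apply]
  split_ifs <;> field_simp [hφ i] <;> ring

end Matrix

theorem eigenvalues_real_lt_one_general {C : ℕ}
    (X Jψ Jφ : Matrix (Fin C) (Fin C) ℝ)
    (hX : X.PosDef) (hψd : Jψ.IsDiag) (hφd : Jφ.IsDiag)
    (hψ : ∀ i, Jψ i i < 1) (hφ : ∀ i, Jφ i i < 0)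
    (ε : ℝ) (hε0 : 0 < ε) :
    ∀ μ : ℂ, (∃ v : Fin C → ℂ, v ≠ 0 ∧
        ((((1 - ε) • (1 : Matrix (Fin C) (Fin C) ℝ) + ε • Jψ + ε • (Jφ * X)).map
            (fun x => (x : ℂ))).mulVec v = μ • v)) →
      μ.im = 0 ∧ μ.re < 1 := by
  rintro μ ⟨v, hv, hJv⟩
  obtain ⟨ψ, rfl⟩ : ∃ ψ, Jψ = diagonal ψ := ⟨_, hψd.diagonal_diag.symm⟩
  obtain ⟨φ, rfl⟩ : ∃ φ, Jφ = diagonal φ := ⟨_, hφd.diagonal_diag.symm⟩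
  simp only [diagonal_apply_eq] at hψ hφ
  set P : Matrix (Fin C) (Fin C) ℝ := diagonal fun i => -(φ i)⁻¹
  have hP : P.PosDef := PosDef.diagonal fun i => by simpa using hφ i
  have hPJ : (P - P * ((1 - ε) • 1 + ε • diagonal ψ + ε • (diagonal φ * X))).PosDef := by
    rw [diagonal_neg_inv_sub_mul_eq fun i => (hφ i).ne]
    exact ((PosDef.diagonal fun i => mul_pos (by simpa using hφ i) (sub_pos.mpr (hψ i))).add
      hX).smul hε0
  have hPJc := hPJ.map_ofReal (𝕜 := ℂ)
  rw [Matrix.map_sub _ (by simp), Matrix.map_mul] at hPJc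
  exact (Complex.lt_def.mp (lt_one_of_mulVec_eq_smul hP.map_ofReal hPJc hv hJv)).symm

/-- Upper eigenvalue bound in Theorem 2: for X symmetric positive definite,
J_ψ, J_φ diagonal with J_ψ ≺ I and J_φ ≺ 0, and 0 < ε ≤ 1, every eigenvalue of
J = (1−ε)I + εJ_ψ + εJ_φX is real and less than 1. -/
theorem eigenvalues_real_lt_one {C : ℕ}
    (X Jψ Jφ : Matrix (Fin C) (Fin C) ℝ)
    (hX : X.PosDef) (hψd : Jψ.IsDiag) (hφd : Jφ.IsDiag)
    (hψ : ∀ i, Jψ i i < 1) (hφ : ∀ i, Jφ i i < 0)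
    (ε : ℝ) (hε0 : 0 < ε) (hε1 : ε ≤ 1) :
    ∀ μ : ℂ, (∃ v : Fin C → ℂ, v ≠ 0 ∧
        ((((1 - ε) • (1 : Matrix (Fin C) (Fin C) ℝ) + ε • Jψ + ε • (Jφ * X)).map
            (fun x => (x : ℂ))).mulVec v = μ • v)) →
      μ.im = 0 ∧ μ.re < 1 :=
  eigenvalues_real_lt_one_general X Jψ Jφ hX hψd hφd hψ hφ ε hε0
end

section
/- Let X ∈ ℝ^{C×C} be symmetric positive definite, J_ψ, J_φ ∈ ℝ^{C×C} diagonal with J_ψ ≺ I, J_φ ≺ 0, and bounds ‖J_ψ‖ ≤ L_ψ, ‖J_φ‖ ≤ L_φ. If 0 < ε < 2/(L_ψ + L_φ‖X‖ + 1), then the spectral radius of J = (1−ε)I + εJ_ψ + εJ_φ X is strictly less than 1. -/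
open Matrix
open scoped ComplexOrder

lemma abs_one_sub_add_mul_lt_one {ε r K : ℝ} (hε0 : 0 < ε) (hr1 : r < 1) (hrK : |r| ≤ K)
    (hε1 : ε < 2 / (K + 1)) : |1 - ε + ε * r| < 1 := by
  have hεK : ε * (K + 1) < 2 := (lt_div_iff₀ (by linarith [abs_nonneg r])).mp hε1
  rw [abs_lt]
  constructor <;> nlinarith [abs_le.mp hrK, mul_pos hε0 (sub_pos.mpr hr1)]

section
variable {n 𝕜 : Type*} [Fintype n] [RCLike 𝕜]

-- In `ComplexOrder`, `ν < 1` says that `ν` is real and less than `1`.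
lemma lt_one_of_mulVec_eq_smul_mulVec {H P : Matrix n n 𝕜} (hP : P.PosDef)
    (hPH : (P - H).PosDef) {v : n → 𝕜} (hv : v ≠ 0) {ν : 𝕜} (h : H *ᵥ v = ν • P *ᵥ v) :
    ν < 1 := by
  have key : star v ⬝ᵥ (P - H) *ᵥ v = (1 - ν) * (star v ⬝ᵥ P *ᵥ v) := by
    rw [sub_mulVec, h, dotProduct_sub, dotProduct_smul, smul_eq_mul]; ring
  have hPv := hP.dotProduct_mulVec_pos hv
  have hPHv := hPH.dotProduct_mulVec_pos hv
  rw [key] at hPHv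
  have hν : 0 < 1 - ν := by
    simpa [mul_div_cancel_right₀ _ hPv.ne'] using div_pos hPHv hPv
  exact sub_pos.mp hν

lemma exists_ne_zero_mulVec_eq_smul_of_map_ofReal {A : Matrix n n ℝ} {r : ℝ} {v : n → 𝕜}
    (hv : v ≠ 0) (h : A.map ((↑) : ℝ → 𝕜) *ᵥ v = (r : 𝕜) • v) :
    ∃ u : n → ℝ, u ≠ 0 ∧ A *ᵥ u = r • u := by
  have hre : A *ᵥ (fun i => RCLike.re (v i)) = r • fun i => RCLike.re (v i) := by
    ext i
    simpa [mulVec, dotProduct, map_sum] using congrArg RCLike.re (congrFun h i)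
  have him : A *ᵥ (fun i => RCLike.im (v i)) = r • fun i => RCLike.im (v i) := by
    ext i
    simpa [mulVec, dotProduct, map_sum] using congrArg RCLike.im (congrFun h i)
  by_cases hre0 : (fun i => RCLike.re (v i)) = 0
  · refine ⟨_, fun him0 => hv ?_, him⟩
    ext i
    exact RCLike.ext (by simpa using congrFun hre0 i) (by simpa using congrFun him0 i)
  · exact ⟨_, hre0, hre⟩

variable [DecidableEq n]

lemma mulVec_eq_smul_of_smul_one_add_smul {K : Type*} [Field K] {B : Matrix n n K} {a ε μ : K}
    (hε : ε ≠ 0) {v : n → K} (h : (a • 1 + ε • B) *ᵥ v = μ • v) :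
    B *ᵥ v = ((μ - a) / ε) • v := by
  rw [add_mulVec, smul_mulVec, smul_mulVec, one_mulVec] at h
  rw [div_eq_inv_mul, mul_smul, sub_smul, ← h]
  simp [smul_smul, hε]

open scoped MatrixOrder Matrix.Norms.L2Operator in
lemma Matrix.PosDef.map_ofReal_s12 {M : Matrix n n ℝ} (hM : M.PosDef) :
    (M.map ((↑) : ℝ → 𝕜)).PosDef := by
  obtain ⟨B, hB⟩ := CStarAlgebra.nonneg_iff_eq_star_mul_self.mp hM.posSemidef.nonneg
  have hpsd : (M.map ((↑) : ℝ → 𝕜)).PosSemidef := by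
    rw [hB, Matrix.map_mul (f := algebraMap ℝ 𝕜), star_eq_conjTranspose,
      conjTranspose_map _ (fun _ => by simp)]
    exact posSemidef_conjTranspose_mul_self _
  rw [hpsd.posDef_iff_det_ne_zero]
  change (M.map (algebraMap ℝ 𝕜)).det ≠ 0
  rw [← RingHom.mapMatrix_apply, ← RingHom.map_det]
  exact (map_ne_zero _).mpr hM.det_pos.ne'

lemma lt_one_of_diagonal_add_diagonal_mul_mulVec_eq_smul {ψ φ : n → ℝ} {X : Matrix n n ℝ}
    (hX : X.PosDef) (hψ : ∀ i, ψ i < 1) (hφ : ∀ i, φ i < 0) {v : n → 𝕜} (hv : v ≠ 0) {ν : 𝕜}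
    (h : (diagonal ψ + diagonal φ * X).map ((↑) : ℝ → 𝕜) *ᵥ v = ν • v) : ν < 1 := by
  set P : Matrix n n ℝ := diagonal fun i => -(φ i)⁻¹
  have hP : P.PosDef := posDef_diagonal_iff.mpr fun i => by simpa using hφ i
  have hPA : P - P * (diagonal ψ + diagonal φ * X) =
      diagonal (fun i => -(φ i)⁻¹ * (1 - ψ i)) + X := by
    have hPφ : P * diagonal φ = -1 := by
      rw [diagonal_mul_diagonal, ← diagonal_one, diagonal_neg]
      congr 1; funext i; field_simp [(hφ i).ne]
    rw [mul_add, ← Matrix.mul_assoc, hPφ, diagonal_mul_diagonal, neg_one_mul,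
      sub_add_eq_sub_sub, sub_neg_eq_add, diagonal_sub]
    congr 2; funext i; ring
  have hPA_pos : (P - P * (diagonal ψ + diagonal φ * X)).PosDef := by
    rw [hPA]
    refine PosDef.add (posDef_diagonal_iff.mpr fun i => ?_) hX
    exact mul_pos (by simpa using hφ i) (sub_pos.mpr (hψ i))
  refine lt_one_of_mulVec_eq_smul_mulVec (H := (P * (diagonal ψ + diagonal φ * X)).map (↑))
    hP.map_ofReal_s12 ?_ hv ?_
  · rw [← Matrix.map_sub _ RCLike.ofReal_sub]
    exact hPA_pos.map_ofReal_s12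
  · rw [Matrix.map_mul, ← mulVec_mulVec, h, mulVec_smul]

end

section
open scoped Matrix.Norms.L2Operator

variable {C : ℕ}

lemma opNorm_eq_l2_opNorm (A : Matrix (Fin C) (Fin C) ℝ) : opNorm A = ‖A‖ :=
  rfl

lemma abs_le_opNorm_of_mulVec_eq_smul {A : Matrix (Fin C) (Fin C) ℝ} {u : Fin C → ℝ}
    (hu : u ≠ 0) {r : ℝ} (h : A *ᵥ u = r • u) : |r| ≤ opNorm A := by
  have hpos : 0 < ‖WithLp.toLp 2 u‖ := by simpa using hu
  rw [opNorm_eq_l2_opNorm]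
  refine le_of_mul_le_mul_right ?_ hpos
  simpa [h, norm_smul] using l2_opNorm_mulVec A (WithLp.toLp 2 u)

lemma opNorm_add_mul_le (A B X : Matrix (Fin C) (Fin C) ℝ) :
    opNorm (A + B * X) ≤ opNorm A + opNorm B * opNorm X := by
  simp only [opNorm_eq_l2_opNorm]
  exact (norm_add_le A (B * X)).trans (add_le_add_right (norm_mul_le B X) _)

lemma opNorm_nonneg (A : Matrix (Fin C) (Fin C) ℝ) : 0 ≤ opNorm A :=
  norm_nonneg _

end

/-- Spectral radius bound in Theorem 2: for X symmetric positive definite,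
J_ψ, J_φ diagonal with J_ψ ≺ I, J_φ ≺ 0, ‖J_ψ‖ ≤ L_ψ, ‖J_φ‖ ≤ L_φ, and
0 < ε < 2/(L_ψ + L_φ‖X‖ + 1), every eigenvalue of
J = (1−ε)I + εJ_ψ + εJ_φX has modulus strictly less than 1. -/
theorem spectral_radius_lt_one {C : ℕ}
    (X Jψ Jφ : Matrix (Fin C) (Fin C) ℝ)
    (hX : X.PosDef) (hψd : Jψ.IsDiag) (hφd : Jφ.IsDiag)
    (hψ : ∀ i, Jψ i i < 1) (hφ : ∀ i, Jφ i i < 0)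
    (Lψ Lφ : ℝ) (hψn : opNorm Jψ ≤ Lψ) (hφn : opNorm Jφ ≤ Lφ)
    (ε : ℝ) (hε0 : 0 < ε) (hε1 : ε < 2 / (Lψ + Lφ * opNorm X + 1)) :
    ∀ μ : ℂ, (∃ v : Fin C → ℂ, v ≠ 0 ∧
        ((((1 - ε) • (1 : Matrix (Fin C) (Fin C) ℝ) + ε • Jψ + ε • (Jφ * X)).map
            (fun x => (x : ℂ))).mulVec v = μ • v)) →
      ‖μ‖ < 1 := by
  rintro μ ⟨v, hv, hμ⟩
  have hJ : ((1 - ε) • (1 : Matrix (Fin C) (Fin C) ℝ) + ε • Jψ + ε • (Jφ * X)).map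
      (fun x => (x : ℂ)) =
        ((1 - ε : ℝ) : ℂ) • 1 + (ε : ℂ) • (Jψ + Jφ * X).map (fun x => (x : ℂ)) := by
    rw [add_assoc, ← smul_add]
    ext i j
    by_cases hij : i = j <;> simp [hij]
  set ν := (μ - (1 - ε : ℝ)) / ε with hν
  have hA : (Jψ + Jφ * X).map (fun x => (x : ℂ)) *ᵥ v = ν • v :=
    mulVec_eq_smul_of_smul_one_add_smul (by exact_mod_cast hε0.ne') (hJ ▸ hμ)
  have hν1 : ν < 1 := by
    rw [← hψd.diagonal_diag, ← hφd.diagonal_diag] at hA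
    exact lt_one_of_diagonal_add_diagonal_mul_mulVec_eq_smul hX hψ hφ hv hA
  obtain ⟨hr1, hνim⟩ := Complex.lt_def.mp hν1
  rw [Complex.one_re] at hr1
  set r := ν.re
  have hνr : ν = r := Complex.ext rfl (by simpa using hνim)
  obtain ⟨u, hu, hAu⟩ := exists_ne_zero_mulVec_eq_smul_of_map_ofReal hv (hνr ▸ hA)
  have hrK : |r| ≤ Lψ + Lφ * opNorm X := by
    refine (abs_le_opNorm_of_mulVec_eq_smul hu hAu).trans ((opNorm_add_mul_le _ _ _).trans ?_)
    gcongr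
    exact opNorm_nonneg X
  have hμr : μ = ((1 - ε + ε * r : ℝ) : ℂ) := by
    rw [hν, div_eq_iff (by exact_mod_cast hε0.ne')] at hνr
    push_cast at hνr ⊢
    linear_combination hνr
  rw [hμr, Complex.norm_real, Real.norm_eq_abs]
  exact abs_one_sub_add_mul_lt_one hε0 hr1 hrK hε1
end
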